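/- In a commutative idempotent involutive residuated lattice, for a negative element a (a ≤ 1) and any x with a·x = a, one has (¬x ∨ a) ∧ ¬a = ¬x and (x ∧ ¬a) ∨ a = x. -/

import Mathlib

/-- A commutative idempotent involutive residuated lattice. -/
class CIdInRL (α : Type*) extends Lattice α, CommMonoid α, Zero α where
  arrow : α → α → α
  residuation : ∀ x y z : α, x * y ≤ z ↔ y ≤ arrow x z
  idem : ∀ x : α, x * x = x
  involutive : ∀ x : α, arrow (arrow x 0) 0 = x

namespace CIdInRL
variable {α : Type*} [CIdInRL α]
/-- linear negation ¬x := x → 0 -/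
def neg (x : α) : α := arrow x 0
/-- 0_x := x ∧ ¬x -/
def zx (x : α) : α := x ⊓ neg x
/-- 1_x := x ∨ ¬x -/
def ox (x : α) : α := x ⊔ neg x
/-- monoidal order x ⊑ y iff x·y = x -/
def mleq (x y : α) : Prop := x * y = x
end CIdInRL

/-!
Since `a ≤ 1`, multiplication by `a` is deflationary, so `a = a·x ≤ x` and `¬x ≤ ¬a`; this gives
`¬x ≤ (¬x ∨ a) ∧ ¬a`. For the converse it suffices that `c·x ≤ 0` for `c = (¬x ∨ a) ∧ ¬a`.
Distributing, `c·x ≤ x·¬x ∨ a·x ≤ a ∨ 0`, and `c·x ≤ ¬a·x ≤ ¬a` because `a·(x·¬a) = a·¬a ≤ 0`.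
Finally `(a ∨ 0) ∧ ¬a ≤ 0`: an element `w` of it satisfies `w = w·w ≤ w·a ∨ w·0`, where
`w·a ≤ ¬a·a ≤ 0` and `w·0 ≤ a·0 ∨ 0·0 ≤ 0`. The second identity is the image of the first under
the order-reversing involution `¬`.
-/

namespace CIdInRL

variable {α : Type*} [CIdInRL α]

theorem le_arrow_iff {x y z : α} : y ≤ arrow x z ↔ x * y ≤ z := (residuation x y z).symm

theorem le_neg_iff {x y : α} : y ≤ neg x ↔ x * y ≤ 0 := le_arrow_iff

theorem mul_neg_le_zero (x : α) : x * neg x ≤ 0 := le_neg_iff.mp le_rfl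

protected theorem neg_neg (x : α) : neg (neg x) = x := involutive x

instance : IsOrderedMonoid α where
  mul_le_mul_left y z h x := by
    rw [mul_comm y, mul_comm z]
    exact le_arrow_iff.mp (h.trans (le_arrow_iff.mpr le_rfl))

protected theorem neg_le_neg {x y : α} (h : x ≤ y) : neg y ≤ neg x :=
  le_neg_iff.mpr ((mul_le_mul_left h _).trans (mul_neg_le_zero y))

theorem neg_le_neg_iff {x y : α} : neg x ≤ neg y ↔ y ≤ x :=
  ⟨fun h ↦ by simpa only [CIdInRL.neg_neg] using CIdInRL.neg_le_neg h, CIdInRL.neg_le_neg⟩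

def negOrderIso : α ≃o αᵒᵈ where
  toFun x := OrderDual.toDual (neg x)
  invFun x := neg (OrderDual.ofDual x)
  left_inv := CIdInRL.neg_neg
  right_inv x := CIdInRL.neg_neg (OrderDual.ofDual x)
  map_rel_iff' := neg_le_neg_iff (α := α)

protected theorem neg_inf (x y : α) : neg (x ⊓ y) = neg x ⊔ neg y := negOrderIso.map_inf x y

protected theorem neg_sup (x y : α) : neg (x ⊔ y) = neg x ⊓ neg y := negOrderIso.map_sup x y

protected theorem mul_sup (x y z : α) : x * (y ⊔ z) = x * y ⊔ x * z := by
  refine le_antisymm ?_ (sup_le (mul_le_mul_right le_sup_left x) (mul_le_mul_right le_sup_right x))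
  exact le_arrow_iff.mp (sup_le (le_arrow_iff.mpr le_sup_left) (le_arrow_iff.mpr le_sup_right))

theorem le_mul_of_le {x y : α} (h : x ≤ y) : x ≤ x * y :=
  (idem x).symm.le.trans (mul_le_mul_right h x)

theorem sup_zero_inf_neg_le_zero {a : α} (ha : a ≤ 1) : (a ⊔ 0) ⊓ neg a ≤ 0 := by
  set w := (a ⊔ 0) ⊓ neg a
  have hwa : w * a ≤ 0 := by
    rw [mul_comm]
    exact (mul_le_mul_right inf_le_right a).trans (mul_neg_le_zero a)
  have hw0 : w * 0 ≤ 0 :=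
    calc w * 0 ≤ 0 * (a ⊔ 0) := by rw [mul_comm]; exact mul_le_mul_right inf_le_left 0
      _ = 0 * a ⊔ 0 * 0 := CIdInRL.mul_sup 0 a 0
      _ ≤ 0 := sup_le (mul_le_of_le_one_right' ha) (idem 0).le
  calc w ≤ w * (a ⊔ 0) := le_mul_of_le inf_le_left
    _ = w * a ⊔ w * 0 := CIdInRL.mul_sup w a 0
    _ ≤ 0 := sup_le hwa hw0

theorem mul_neg_le_neg_of_mul_eq {a x : α} (hx : a * x = a) : x * neg a ≤ neg a :=
  le_neg_iff.mpr (by rw [← mul_assoc, hx]; exact mul_neg_le_zero a)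

theorem sup_inf_neg_le_neg {a x : α} (ha : a ≤ 1) (hx : a * x = a) :
    (neg x ⊔ a) ⊓ neg a ≤ neg x := by
  set c := (neg x ⊔ a) ⊓ neg a
  have hc_sup : x * c ≤ a ⊔ 0 :=
    calc x * c ≤ x * (neg x ⊔ a) := mul_le_mul_right inf_le_left x
      _ = x * neg x ⊔ a * x := by rw [CIdInRL.mul_sup, mul_comm x a]
      _ ≤ a ⊔ 0 := by rw [hx, sup_comm]; exact sup_le_sup_left (mul_neg_le_zero x) a
  have hc_neg : x * c ≤ neg a :=
    (mul_le_mul_right inf_le_right x).trans (mul_neg_le_neg_of_mul_eq hx)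
  exact le_neg_iff.mpr ((le_inf hc_sup hc_neg).trans (sup_zero_inf_neg_le_zero ha))

end CIdInRL

open CIdInRL in
theorem stmt14 {α : Type*} [CIdInRL α] (a x : α) (ha : a ≤ 1) (hx : a * x = a) :
    (neg x ⊔ a) ⊓ neg a = neg x ∧ (x ⊓ neg a) ⊔ a = x := by
  have hax : a ≤ x := hx ▸ mul_le_of_le_one_left' ha
  have hneg : (neg x ⊔ a) ⊓ neg a = neg x :=
    (sup_inf_neg_le_neg ha hx).antisymm (le_inf le_sup_left (neg_le_neg_iff.mpr hax))
  refine ⟨hneg, ?_⟩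
  simpa only [CIdInRL.neg_inf, CIdInRL.neg_sup, CIdInRL.neg_neg] using congrArg neg hneg
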